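/- arXiv:2503.23749 — 4 statements merged into one kernel-verified Lean document; each statement's English description precedes it below -/
import Mathlib

section
/- Let V be a vector space over ℂ, Φ ⊆ V* a set of linear functionals such that ⋂_{φ ∈ Φ} ker(φ) = 0, W ⊆ V a linear subspace, and n a positive integer. Then dim W < n if and only if det((φᵢ(wⱼ))_{1 ≤ i,j ≤ n}) = 0 for every choice of vectors w₁, …, wₙ ∈ W and functionals φ₁, …, φₙ ∈ Φ. -/
/-!
If `w₁, …, wₙ` are linearly dependent, so are the columns of `(φᵢ(wⱼ))`. If they are independent,
the rows `(φ(w₁), …, φ(wₙ))`, `φ ∈ Φ`, span `Kⁿ`: a vector `c` annihilating all of them gives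
`φ(∑ cⱼ wⱼ) = 0` for every `φ ∈ Φ`, hence `∑ cⱼ wⱼ = 0` and `c = 0`. Choosing `n` independent rows
among them yields a nonzero determinant. So some determinant is nonzero iff `W` contains `n`
independent vectors, i.e. iff `dim W ≥ n`.
-/

open Module Submodule Matrix

section

variable {V : Type*} [AddCommGroup V]

theorem exists_linearIndependent_of_span_eq_top {K M ι : Type*} [DivisionRing K]
    [AddCommGroup M] [Module K M] (B : Basis ι K M) {S : Set M} (hS : span K S = ⊤) :
    ∃ r : ι → M, (∀ i, r i ∈ S) ∧ LinearIndependent K r := by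
  obtain ⟨b, hbS, hspan, hli⟩ := exists_linearIndependent K S
  let e := B.indexEquiv (Basis.mk hli (by simp [hspan, hS]))
  exact ⟨fun i => e i, fun i => hbS (e i).2, hli.comp e e.injective⟩

theorem linearIndependent_of_det_ne_zero {R ι : Type*} [CommRing R] [IsDomain R] [Module R V]
    [Fintype ι] [DecidableEq ι] {w : ι → V} {φ : ι → V →ₗ[R] R}
    (h : (of fun i j => φ i (w j)).det ≠ 0) : LinearIndependent R w :=
  (linearIndependent_cols_of_det_ne_zero h).of_comp (LinearMap.pi φ)

theorem Submodule.natCast_le_rank_iff_exists_linearIndependent {R : Type*} [Ring R]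
    [Nontrivial R] [Module R V] {n : ℕ} {W : Submodule R V} :
    n ≤ Module.rank R W ↔ ∃ w : Fin n → V, (∀ i, w i ∈ W) ∧ LinearIndependent R w := by
  rw [_root_.natCast_le_rank_iff]
  exact ⟨fun ⟨w, hw⟩ => ⟨W.subtype ∘ w, fun i => (w i).2, hw.map' W.subtype W.ker_subtype⟩,
    fun ⟨w, hwW, hw⟩ => ⟨fun i => ⟨w i, hwW i⟩, hw.of_comp W.subtype⟩⟩

section Field

variable {K : Type*} [Field K] [Module K V]

theorem span_image_comp_eq_top {ι : Type*} [Fintype ι] {w : ι → V} (hw : LinearIndependent K w)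
    {Φ : Set (V →ₗ[K] K)} (hΦ : ⨅ φ ∈ Φ, LinearMap.ker φ = ⊥) :
    span K ((fun φ : V →ₗ[K] K => ⇑φ ∘ w) '' Φ) = ⊤ := by
  classical
  by_contra hne
  obtain ⟨f, hf, hker⟩ := exists_dual_map_eq_bot_of_lt_top (lt_top_iff_ne_top.2 hne) inferInstance
  obtain ⟨c, rfl⟩ := (dotProductEquiv K ι).surjective f
  suffices hc : c = 0 from hf (by rw [hc, map_zero])
  refine funext <| Fintype.linearIndependent_iff.1 hw c ?_
  suffices ∑ i, c i • w i ∈ ⨅ φ ∈ Φ, LinearMap.ker φ by simpa [hΦ] using this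
  simp only [Submodule.mem_iInf, LinearMap.mem_ker]
  intro φ hφ
  have : dotProductEquiv K ι c (⇑φ ∘ w) ∈ (span K ((fun ψ : V →ₗ[K] K => ⇑ψ ∘ w) '' Φ)).map _ :=
    mem_map_of_mem (subset_span ⟨φ, hφ, rfl⟩)
  rw [hker, mem_bot] at this
  simpa [dotProduct] using this

theorem exists_det_ne_zero_iff_linearIndependent {ι : Type*} [Fintype ι] [DecidableEq ι]
    {Φ : Set (V →ₗ[K] K)} (hΦ : ⨅ φ ∈ Φ, LinearMap.ker φ = ⊥) {w : ι → V} :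
    (∃ φ : ι → V →ₗ[K] K, (∀ i, φ i ∈ Φ) ∧ (of fun i j => φ i (w j)).det ≠ 0) ↔
      LinearIndependent K w := by
  refine ⟨fun ⟨φ, _, h⟩ => linearIndependent_of_det_ne_zero h, fun hw => ?_⟩
  obtain ⟨r, hrΦ, hr⟩ := exists_linearIndependent_of_span_eq_top (Pi.basisFun K ι)
    (span_image_comp_eq_top hw hΦ)
  choose φ hφΦ hφr using hrΦ
  refine ⟨φ, hφΦ, ?_⟩
  rw [← isUnit_iff_ne_zero, ← isUnit_iff_isUnit_det, ← linearIndependent_rows_iff_isUnit]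
  rwa [show (of fun i j => φ i (w j)).row = r from funext hφr]

end Field

end

theorem stmt0_general (V : Type*) [AddCommGroup V] [Module ℂ V]
    (Φ : Set (V →ₗ[ℂ] ℂ)) (hΦ : (⨅ φ ∈ Φ, LinearMap.ker φ) = ⊥)
    (W : Submodule ℂ V) (n : ℕ) :
    Module.rank ℂ W < (n : Cardinal) ↔
      ∀ (w : Fin n → V) (φ : Fin n → (V →ₗ[ℂ] ℂ)),
        (∀ i, w i ∈ W) → (∀ i, φ i ∈ Φ) →
        Matrix.det (Matrix.of fun i j : Fin n => φ i (w j)) = 0 := by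
  rw [← not_le, W.natCast_le_rank_iff_exists_linearIndependent]
  simp only [← exists_det_ne_zero_iff_linearIndependent hΦ, not_exists, not_and, not_not]
  exact forall_congr' fun _ => forall_comm

/-- Let `V` be a `ℂ`-vector space, `Φ` a set of linear functionals on `V`
with `⋂_{φ ∈ Φ} ker φ = 0`, `W ⊆ V` a subspace and `n` a positive integer.  Then
`dim W < n` iff `det (φᵢ (wⱼ)) = 0` for all `w₁, …, wₙ ∈ W` and `φ₁, …, φₙ ∈ Φ`. -/
theorem stmt0 (V : Type*) [AddCommGroup V] [Module ℂ V]
    (Φ : Set (V →ₗ[ℂ] ℂ)) (hΦ : (⨅ φ ∈ Φ, LinearMap.ker φ) = ⊥)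
    (W : Submodule ℂ V) (n : ℕ) (hn : 0 < n) :
    Module.rank ℂ W < (n : Cardinal) ↔
      ∀ (w : Fin n → V) (φ : Fin n → (V →ₗ[ℂ] ℂ)),
        (∀ i, w i ∈ W) → (∀ i, φ i ∈ Φ) →
        Matrix.det (Matrix.of fun i j : Fin n => φ i (w j)) = 0 :=
  stmt0_general V Φ hΦ W n
end

section
/- Let A be a noetherian ℂ-algebra of at most countable dimension and let {Mᵢ}_{i ∈ I} be a family of irreducible (simple) A-modules. Then PIdeg(A) ≥ sup{dim_ℂ(Mᵢ) : i ∈ I}, and equality holds if ⋂_{i ∈ I} Ann_A(Mᵢ) = 0. -/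
/-- A noncommutative polynomial with integer coefficients (an element of the free
`ℤ`-algebra on countably many generators) is a polynomial identity of `A` if every
evaluation of it in `A` vanishes. -/
def IsPolyIdentity (A : Type*) [Ring A] (f : FreeAlgebra ℤ ℕ) : Prop :=
  ∀ σ : ℕ → A, FreeAlgebra.lift ℤ σ f = 0

/-- `PI(A)`: the set of all polynomial identities of `A`. -/
def PIset (A : Type*) [Ring A] : Set (FreeAlgebra ℤ ℕ) := {f | IsPolyIdentity A f}

/-- `PIdeg(A)`: the supremum of the `n ∈ ℕ` such that `PI(A) ⊆ PI(Mₙ(ℂ))`,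
as an element of `ℕ ∪ {∞}`. -/
noncomputable def PIdeg (A : Type*) [Ring A] : ℕ∞ :=
  ⨆ n ∈ {n : ℕ | PIset A ⊆ PIset (Matrix (Fin n) (Fin n) ℂ)}, (n : ℕ∞)

/-- The standard polynomial `sₙ = Σ_{w ∈ Sₙ} sgn(w) X_{w(1)} ⋯ X_{w(n)}`, on the
indeterminates indexed by `0, …, n-1`. -/
noncomputable def stdPoly (n : ℕ) : FreeAlgebra ℤ ℕ :=
  ∑ w : Equiv.Perm (Fin n),
    ((Equiv.Perm.sign w : ℤˣ) : ℤ) • (List.ofFn fun i : Fin n => FreeAlgebra.ι ℤ (w i : ℕ)).prod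

/-- `J(A)^C = 0`: every product of `C` elements of the Jacobson radical of `A` vanishes. -/
def JacobsonPowZero (A : Type*) [Ring A] (C : ℕ) : Prop :=
  ∀ a : Fin C → A, (∀ i, a i ∈ Ideal.jacobson (⊥ : Ideal A)) → (List.ofFn a).prod = 0

/-!
A simple module `M` over a countable-dimensional `ℂ`-algebra `A` is a quotient of `A`, so it has
countable dimension. Since `ℂ` is uncountable, the resolvents of an endomorphism with empty
spectrum would be uncountably many independent vectors; hence `End_A M = ℂ` (Dixmier), and the
Jacobson density theorem realises `Mₙ(ℂ)`, for every `n ≤ dim M`, as a quotient of the subalgebra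
of `A` stabilising an `n`-dimensional subspace. Identities pass to subalgebras and quotients, which
gives the lower bound.

If the annihilators meet in `0`, then `A` embeds into `∏ᵢ End_ℂ(Mᵢ)`. When every `dim Mᵢ ≤ d`,
each factor has dimension `≤ d²` and so satisfies the Capelli identity of degree `d² + 1`, an
alternating function of its first set of variables; a closed path of `d² + 1` distinct matrix
units shows that this is not an identity of `Mₙ(ℂ)` for `n > d`.
-/

universe u v w

theorem FreeAlgebra.lift_map {B C : Type*} [Ring B] [Ring C] (φ : B →+* C) (σ : ℕ → B)
    (f : FreeAlgebra ℤ ℕ) : φ (FreeAlgebra.lift ℤ σ f) = FreeAlgebra.lift ℤ (φ ∘ σ) f := by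
  have : φ.toIntAlgHom.comp (FreeAlgebra.lift ℤ σ) = FreeAlgebra.lift ℤ (φ ∘ σ) :=
    FreeAlgebra.hom_ext (by ext; simp)
  exact DFunLike.congr_fun this f

theorem PIset_subset_of_injective {B C : Type*} [Ring B] [Ring C] (φ : B →+* C)
    (hφ : Function.Injective φ) : PIset C ⊆ PIset B := fun f hf σ =>
  hφ <| by rw [map_zero, FreeAlgebra.lift_map]; exact hf _

theorem PIset_subset_of_surjective {B C : Type*} [Ring B] [Ring C] (φ : B →+* C)
    (hφ : Function.Surjective φ) : PIset B ⊆ PIset C := by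
  intro f hf σ
  obtain ⟨τ, rfl⟩ : ∃ τ : ℕ → B, φ ∘ τ = σ := ⟨_, funext fun n => (hφ (σ n)).choose_spec⟩
  rw [← FreeAlgebra.lift_map, hf τ, map_zero]

theorem mem_PIset_pi {κ : Type*} {B : κ → Type*} [∀ i, Ring (B i)] {f : FreeAlgebra ℤ ℕ}
    (h : ∀ i, f ∈ PIset (B i)) : f ∈ PIset (∀ i, B i) := fun σ => funext fun i =>
  (FreeAlgebra.lift_map (Pi.evalRingHom B i) σ f).trans (h i _)

theorem le_PIdeg {A : Type*} [Ring A] {n : ℕ}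
    (h : PIset A ⊆ PIset (Matrix (Fin n) (Fin n) ℂ)) : (n : ℕ∞) ≤ PIdeg A :=
  le_iSup₂ (f := fun n (_ : n ∈ {n : ℕ | PIset A ⊆ PIset (Matrix (Fin n) (Fin n) ℂ)}) =>
    (n : ℕ∞)) n h

section Capelli

open Matrix

def capelliEval {B : Type*} [Ring B] {k : ℕ} (x y : Fin k → B) : B :=
  ∑ w : Equiv.Perm (Fin k), Equiv.Perm.sign w • (List.ofFn fun i => x (w i) * y i).prod

def capelli (k : ℕ) : FreeAlgebra ℤ ℕ :=
  capelliEval (fun i : Fin k => FreeAlgebra.ι ℤ (2 * i)) (fun i => FreeAlgebra.ι ℤ (2 * i + 1))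

theorem map_capelliEval {B C : Type*} [Ring B] [Ring C] (φ : B →+* C) {k : ℕ}
    (x y : Fin k → B) : φ (capelliEval x y) = capelliEval (φ ∘ x) (φ ∘ y) := by
  simp [capelliEval, map_sum, map_zsmul_unit, map_list_prod, List.map_ofFn, Function.comp_def]

theorem lift_capelli {B : Type*} [Ring B] (k : ℕ) (σ : ℕ → B) :
    FreeAlgebra.lift ℤ σ (capelli k) =
      capelliEval (fun i : Fin k => σ (2 * i)) (fun i => σ (2 * i + 1)) := by
  rw [capelli, ← AlgHom.coe_toRingHom, map_capelliEval]
  simp [Function.comp_def]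

theorem exists_lift_capelli_eq {B : Type*} [Ring B] {k : ℕ} (x y : Fin k → B) :
    ∃ σ : ℕ → B, FreeAlgebra.lift ℤ σ (capelli k) = capelliEval x y := by
  refine ⟨fun m => if h : m / 2 < k then if m % 2 = 0 then x ⟨m / 2, h⟩ else y ⟨m / 2, h⟩
    else 0, ?_⟩
  rw [lift_capelli]
  congr 1 <;> funext i <;> simp [Nat.mul_add_div]

theorem capelliEval_eq_zero_of_not_linearIndependent {K B : Type*} [Field K] [Ring B]
    [Algebra K B] {k : ℕ} {x : Fin k → B} (hx : ¬LinearIndependent K x) (y : Fin k → B) :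
    capelliEval x y = 0 := by
  let G : MultilinearMap K (fun _ : Fin k => B) B :=
    (MultilinearMap.mkPiAlgebraFin K k B).compLinearMap fun i => LinearMap.mulRight K (y i)
  rw [← G.alternatization.map_linearDependent x hx, MultilinearMap.alternatization_apply]
  rfl

theorem capelli_mem_PIset_of_rank_lt {K B : Type*} [Field K] [Ring B] [Algebra K B] {k : ℕ}
    (hB : Module.rank K B < k) : capelli k ∈ PIset B := fun σ => by
  rw [lift_capelli]
  refine capelliEval_eq_zero_of_not_linearIndependent (K := K) (fun hind => ?_) _
  exact (by simpa using hind.cardinal_lift_le_rank : (k : Cardinal) ≤ _).not_gt hB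

theorem capelli_mem_PIset_end {K V : Type*} [Field K] [AddCommGroup V] [Module K V] {d : ℕ}
    (h : Module.rank K V ≤ d) : capelli (d * d + 1) ∈ PIset (Module.End K V) := by
  have : FiniteDimensional K V :=
    Module.rank_lt_aleph0_iff.mp (h.trans_lt Cardinal.natCast_lt_aleph0)
  have hd := Module.finrank_le_of_rank_le h
  apply capelli_mem_PIset_of_rank_lt (K := K)
  rw [← Module.finrank_eq_rank, Module.finrank_linearMap, Nat.cast_lt]
  nlinarith

theorem Matrix.prod_ofFn_single_one {R ι : Type*} [Semiring R] [Fintype ι] [DecidableEq ι]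
    {m : ℕ} (p q : Fin (m + 1) → ι) :
    (List.ofFn fun i => single (p i) (q i) (1 : R)).prod =
      if ∀ i : Fin m, q i.castSucc = p i.succ then single (p 0) (q (Fin.last m)) 1 else 0 := by
  induction m with
  | zero => simp
  | succ m ih =>
    rw [List.ofFn_succ, List.prod_cons, ih]
    simp only [Fin.forall_fin_succ (n := m), Fin.succ_castSucc, Fin.succ_last, Fin.castSucc_zero,
      Fin.succ_zero_eq_one]
    by_cases h0 : q 0 = p 1
    · simp [h0]
    · split_ifs <;> simp_all [single_mul_single_of_ne]

theorem exists_capelliEval_matrix_ne_zero {R : Type*} [Ring R] [Nontrivial R] {m n : ℕ}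
    (h : m + 1 ≤ n * n) :
    ∃ x y : Fin (m + 1) → Matrix (Fin n) (Fin n) R, capelliEval x y ≠ 0 := by
  classical
  let e : Fin (m + 1) ↪ Fin n × Fin n := (Fin.castLEEmb h).trans finProdFinEquiv.symm.toEmbedding
  let a i := (e i).1
  let b i := (e i).2
  -- `x i * y i` is the link `a i → a (i + 1)` of the closed path `a 0 → a 1 → ⋯ → a m → a 0`;
  -- as `e` is injective, only the identity permutation lets the links chain up.
  let x i : Matrix (Fin n) (Fin n) R := single (a i) (b i) 1
  let y i : Matrix (Fin n) (Fin n) R := single (b i) (a (i + 1)) 1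
  have hlink (w : Equiv.Perm (Fin (m + 1))) (i : Fin (m + 1)) :
      x (w i) * y i = if b (w i) = b i then single (a (w i)) (a (i + 1)) 1 else 0 := by
    split_ifs with hb
    · simp [x, y, hb]
    · exact single_mul_single_of_ne (h := hb) ..
  have hterm (w : Equiv.Perm (Fin (m + 1))) (hw : (List.ofFn fun i => x (w i) * y i).prod ≠ 0) :
      w = 1 := by
    have hb : ∀ i, b (w i) = b i := by
      by_contra! ⟨i, hi⟩
      exact hw (List.prod_eq_zero (List.mem_ofFn.mpr ⟨i, by simp [hlink, hi]⟩))
    simp only [hlink, hb, if_true, prod_ofFn_single_one] at hw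
    have hsucc (i : Fin m) : w i.succ = i.succ := by
      have ha := (ite_ne_right_iff.mp hw).1 i
      rw [Fin.coeSucc_eq_succ] at ha
      exact e.injective (Prod.ext ha.symm (hb _))
    ext j : 1
    induction j using Fin.cases with
    | zero =>
      rcases Fin.eq_zero_or_eq_succ (w 0) with h0 | ⟨i, hi⟩
      · simpa using h0
      · exact absurd (w.injective ((hsucc i).trans hi.symm)) (Fin.succ_ne_zero i)
    | succ i => simpa using hsucc i
  have hone : (List.ofFn fun i => x ((1 : Equiv.Perm (Fin (m + 1))) i) * y i).prod =
      single (a 0) (a 0) 1 := by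
    have hlink_one (i : Fin (m + 1)) : x ((1 : Equiv.Perm (Fin (m + 1))) i) * y i =
        single (a i) (a (i + 1)) 1 := by
      simpa using hlink 1 i
    rw [funext hlink_one, prod_ofFn_single_one, if_pos fun i => by rw [Fin.coeSucc_eq_succ],
      Fin.last_add_one]
  refine ⟨x, y, ?_⟩
  rw [capelliEval, Finset.sum_eq_single 1 (fun w _ hw => by
    rw [not_ne_iff.mp (mt (hterm w) hw), smul_zero]) (by simp), hone, map_one, one_smul]
  exact fun h0 => one_ne_zero (α := R) (by simpa using congr_fun (congr_fun h0 (a 0)) (a 0))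

theorem capelli_notMem_PIset_matrix {R : Type*} [Ring R] [Nontrivial R] {m n : ℕ}
    (h : m + 1 ≤ n * n) : capelli (m + 1) ∉ PIset (Matrix (Fin n) (Fin n) R) := fun hmem => by
  obtain ⟨x, y, hxy⟩ := exists_capelliEval_matrix_ne_zero (R := R) h
  obtain ⟨σ, hσ⟩ := exists_lift_capelli_eq x y
  exact hxy (hσ ▸ hmem σ)

theorem PIdeg_le_of_capelli_mem {A : Type*} [Ring A] {d : ℕ}
    (h : capelli (d * d + 1) ∈ PIset A) : PIdeg A ≤ d :=
  iSup₂_le fun n hn => Nat.cast_le.mpr <| by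
    by_contra! hdn
    exact capelli_notMem_PIset_matrix (by nlinarith) (hn h)

end Capelli

namespace spectrum

open Polynomial

variable {K : Type u} {D : Type v} [Field K] [IsAlgClosed K] [Ring D] [Nontrivial D] [Algebra K D]

theorem nonempty_of_aeval_eq_zero {a : D} {p : K[X]} (hp : p ≠ 0) (hpa : aeval a p = 0) :
    (spectrum K a).Nonempty := by
  rw [(IsAlgClosed.splits p).eq_prod_roots, map_mul, aeval_C] at hpa
  have hlead : IsUnit (algebraMap K D p.leadingCoeff) :=
    (isUnit_iff_ne_zero.mpr (leadingCoeff_ne_zero.mpr hp)).map _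
  obtain ⟨k, hk, -⟩ := exists_mem_of_not_isUnit_aeval_prod (p := p)
    fun hu => not_isUnit_zero (hpa ▸ hlead.mul hu)
  exact ⟨k, hk⟩

theorem linearIndependent_resolvent {a : D} (ha : spectrum K a = ∅) :
    LinearIndependent K (resolvent (R := K) a) := by
  classical
  have hinv (r : K) : resolvent a r * (algebraMap K D r - a) = 1 :=
    Ring.inverse_mul_cancel _ (notMem_iff.mp (ha ▸ Set.notMem_empty r))
  rw [linearIndependent_iff']
  intro s g hg r₀ hr₀
  by_contra hne
  -- multiplying the relation by `∏ r ∈ s, (r - a)` gives a polynomial equation for `a`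
  let p : K[X] := ∑ r ∈ s, C (g r) * ∏ r' ∈ s.erase r, (C r' - X)
  have hp : p.eval r₀ ≠ 0 := by
    rw [eval_finsetSum, Finset.sum_eq_single r₀ (fun r _ hr => ?_) (absurd hr₀)]
    · simp [eval_prod, Finset.prod_eq_zero_iff, sub_eq_zero, hne]
    · simp [eval_prod, Finset.prod_eq_zero (Finset.mem_erase.mpr ⟨Ne.symm hr, hr₀⟩)]
  have hpa : aeval a p = (∑ r ∈ s, g r • resolvent a r) * aeval a (∏ r ∈ s, (C r - X)) := by
    simp only [p, map_sum, Finset.sum_mul]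
    refine Finset.sum_congr rfl fun r hr => ?_
    rw [← Finset.mul_prod_erase s _ hr, map_mul, map_mul, aeval_C, smul_mul_assoc,
      ← mul_assoc (resolvent a r)]
    simp [hinv, Algebra.smul_def]
  rw [hg, zero_mul] at hpa
  simpa [ha] using nonempty_of_aeval_eq_zero (fun h0 => hp (by simp [h0])) hpa

theorem nonempty_of_lift_rank_lt
    (h : Cardinal.lift.{u} (Module.rank K D) < Cardinal.lift.{v} (Cardinal.mk K)) (a : D) :
    (spectrum K a).Nonempty :=
  Set.nonempty_iff_ne_empty.mpr fun ha =>
    (linearIndependent_resolvent ha).cardinal_lift_le_rank.not_gt h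

end spectrum

namespace IsSimpleModule

variable {K : Type u} {A : Type v} {M : Type w} [Field K] [Ring A] [Algebra K A]
  [AddCommGroup M] [Module A M] [Module K M] [IsScalarTower K A M] [IsSimpleModule A M]

variable (K A M) in
theorem lift_rank_le :
    Cardinal.lift.{v} (Module.rank K M) ≤ Cardinal.lift.{w} (Module.rank K A) := by
  have := IsSimpleModule.nontrivial A M
  obtain ⟨m, hm⟩ := exists_ne (0 : M)
  exact ((LinearMap.toSpanSingleton A M m).restrictScalars K).lift_rank_le_of_surjective
    (toSpanSingleton_surjective A hm)

/-- **Dixmier's lemma**. -/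
theorem algebraMap_end_surjective [IsAlgClosed K]
    (hM : Cardinal.lift.{u} (Module.rank K M) < Cardinal.lift.{w} (Cardinal.mk K)) :
    Function.Surjective (algebraMap K (Module.End A M)) := by
  intro f
  have := IsSimpleModule.nontrivial A M
  obtain ⟨m, hm⟩ := exists_ne (0 : M)
  let ev : Module.End A M →ₗ[K] M :=
    { toFun φ := φ m, map_add' _ _ := rfl, map_smul' _ _ := rfl }
  have hev : Function.Injective ev := (injective_iff_map_eq_zero ev).mpr fun φ hφ =>
    φ.bijective_or_eq_zero.resolve_left fun hb => hm (hb.injective (hφ.trans φ.map_zero.symm))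
  obtain ⟨c, hc⟩ := spectrum.nonempty_of_lift_rank_lt
    ((Cardinal.lift_le.mpr (ev.rank_le_of_injective hev)).trans_lt hM) f
  refine ⟨c, sub_eq_zero.mp ?_⟩
  exact (algebraMap K _ c - f).bijective_or_eq_zero.resolve_left fun hb =>
    hc ((Module.End.isUnit_iff _).mpr hb)

end IsSimpleModule

section Density

variable {K A M : Type*} [CommRing K] [Ring A] [Algebra K A] [AddCommGroup M] [Module A M]
  [Module K M] [IsScalarTower K A M]

theorem exists_forall_smul_eq_of_algebraMap_end_surjective [IsSemisimpleModule A M]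
    (hscalar : Function.Surjective (algebraMap K (Module.End A M))) (T : M →ₗ[K] M)
    (s : Finset M) : ∃ a : A, ∀ m ∈ s, a • m = T m := by
  -- `T` commutes with `Module.End A M`, which consists of scalars
  let f : Module.End (Module.End A M) M :=
    { toFun := T
      map_add' := T.map_add
      map_smul' φ m := by
        obtain ⟨c, rfl⟩ := hscalar φ
        simp }
  obtain ⟨a, ha⟩ := jacobson_density f s
  exact ⟨a, fun m hm => (ha m hm).symm⟩

variable (A) in
def Submodule.stabilizer (V : Submodule K M) : Subalgebra K A where
  carrier := {a | ∀ m ∈ V, a • m ∈ V}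
  mul_mem' ha hb m hm := by rw [mul_smul]; exact ha _ (hb m hm)
  add_mem' ha hb m hm := by rw [add_smul]; exact V.add_mem (ha m hm) (hb m hm)
  algebraMap_mem' c m hm := by rw [algebraMap_smul]; exact V.smul_mem c hm

def Submodule.stabilizer.toEnd (V : Submodule K M) : V.stabilizer A →ₐ[K] Module.End K V where
  toFun a := (Algebra.lsmul K K M (a : A)).restrict a.2
  map_one' := by ext; simp
  map_mul' a b := by ext; exact mul_smul (a : A) (b : A) _
  map_zero' := by ext; simp
  map_add' a b := by ext; exact add_smul (a : A) (b : A) _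
  commutes' c := by ext; simp

end Density

theorem Submodule.stabilizer.toEnd_surjective {K A M : Type*} [Field K] [Ring A] [Algebra K A]
    [AddCommGroup M] [Module A M] [Module K M] [IsScalarTower K A M] [IsSemisimpleModule A M]
    (hscalar : Function.Surjective (algebraMap K (Module.End A M))) (V : Submodule K M)
    [FiniteDimensional K V] : Function.Surjective (stabilizer.toEnd (A := A) V) := by
  intro T
  obtain ⟨g, hg⟩ := LinearMap.exists_extend (V.subtype ∘ₗ T)
  obtain ⟨s, hs⟩ := (Module.Finite.iff_fg (N := V)).mp inferInstance
  obtain ⟨a, ha⟩ := exists_forall_smul_eq_of_algebraMap_end_surjective hscalar g s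
  have haV (m : M) (hm : m ∈ V) : a • m = g m :=
    LinearMap.eqOn_span' (f := Algebra.lsmul K K M a) ha (hs ▸ hm)
  have hgV (m : V) : g m = T m := LinearMap.congr_fun hg m
  refine ⟨⟨a, fun m hm => haV m hm ▸ hgV ⟨m, hm⟩ ▸ (T ⟨m, hm⟩).2⟩,
    LinearMap.ext fun m => Subtype.ext ?_⟩
  exact (haV m m.2).trans (hgV m)

theorem PIset_subset_PIset_matrix_of_le_rank {K A M : Type*} [Field K] [Ring A] [Algebra K A]
    [AddCommGroup M] [Module A M] [Module K M] [IsScalarTower K A M] [IsSemisimpleModule A M]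
    (hscalar : Function.Surjective (algebraMap K (Module.End A M))) {n : ℕ}
    (hn : n ≤ Module.rank K M) : PIset A ⊆ PIset (Matrix (Fin n) (Fin n) K) := by
  obtain ⟨v, hv⟩ := exists_linearIndependent_of_le_rank hn
  let V := Submodule.span K (Set.range v)
  let b : Module.Basis (Fin n) K V := .span hv
  have : FiniteDimensional K V := b.finiteDimensional_of_finite
  calc PIset A ⊆ PIset (V.stabilizer A) :=
        PIset_subset_of_injective (V.stabilizer A).val.toRingHom Subtype.val_injective
    _ ⊆ PIset (Module.End K V) :=
        PIset_subset_of_surjective _ (Submodule.stabilizer.toEnd_surjective hscalar V)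
    _ ⊆ PIset (Matrix (Fin n) (Fin n) K) :=
        PIset_subset_of_surjective (algEquivMatrix b).toRingEquiv.toRingHom
          (algEquivMatrix b).surjective

theorem injective_pi_lsmul_of_iInf_annihilator_eq_bot {K A ι : Type*} {M : ι → Type*}
    [CommRing K] [Ring A] [Algebra K A] [∀ i, AddCommGroup (M i)] [∀ i, Module A (M i)]
    [∀ i, Module K (M i)] [∀ i, IsScalarTower K A (M i)] (h : ⨅ i, Module.annihilator A (M i) = ⊥) :
    Function.Injective (RingHom.pi fun i => (Algebra.lsmul K K (M i) (A := A)).toRingHom) := by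
  refine (injective_iff_map_eq_zero _).mpr fun a ha => ?_
  have : a ∈ ⨅ i, Module.annihilator A (M i) := Submodule.mem_iInf _ |>.mpr fun i =>
    Module.mem_annihilator.mpr fun m => LinearMap.congr_fun (congr_fun ha i) m
  rwa [h, Submodule.mem_bot] at this

theorem stmt1_general (A : Type*) [Ring A] [Algebra ℂ A]
    (hcount : Module.rank ℂ A ≤ Cardinal.aleph0)
    (ι : Type*) (M : ι → Type*) [∀ i, AddCommGroup (M i)] [∀ i, Module A (M i)]
    [∀ i, Module ℂ (M i)] [∀ i, IsScalarTower ℂ A (M i)]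
    (hsimple : ∀ i, IsSimpleModule A (M i)) :
    (⨆ i, Cardinal.toENat (Module.rank ℂ (M i))) ≤ PIdeg A ∧
      ((⨅ i, Module.annihilator A (M i)) = ⊥ →
        PIdeg A = ⨆ i, Cardinal.toENat (Module.rank ℂ (M i))) := by
  have hscalar (i : ι) : Function.Surjective (algebraMap ℂ (Module.End A (M i))) := by
    have hM : Module.rank ℂ (M i) ≤ Cardinal.aleph0 := Cardinal.lift_le_aleph0.mp <|
      (IsSimpleModule.lift_rank_le ℂ A (M i)).trans (Cardinal.lift_le_aleph0.mpr hcount)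
    refine IsSimpleModule.algebraMap_end_surjective ?_
    simpa using hM.trans_lt Cardinal.aleph0_lt_continuum
  have hge : (⨆ i, Cardinal.toENat (Module.rank ℂ (M i))) ≤ PIdeg A :=
    iSup_le fun i => ENat.forall_natCast_le_iff_le.mp fun n hn =>
      le_PIdeg <| PIset_subset_PIset_matrix_of_le_rank (hscalar i) <|
        Cardinal.natCast_le_toENat.mp hn
  refine ⟨hge, fun hfaithful => le_antisymm ?_ hge⟩
  generalize hd : (⨆ i, Cardinal.toENat (Module.rank ℂ (M i))) = d
  induction d using ENat.recTopCoe with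
  | top => exact le_top
  | coe d =>
    refine PIdeg_le_of_capelli_mem (PIset_subset_of_injective _
      (injective_pi_lsmul_of_iInf_annihilator_eq_bot (K := ℂ) hfaithful) ?_)
    exact mem_PIset_pi fun i => capelli_mem_PIset_end <| Cardinal.toENat_le_natCast.mp <|
      hd ▸ le_iSup (fun i => Cardinal.toENat (Module.rank ℂ (M i))) i

/-- For a noetherian `ℂ`-algebra `A` of at most countable dimension and a
family `{Mᵢ}` of simple `A`-modules, `PIdeg(A) ≥ sup dim_ℂ Mᵢ`, with equality when
`⋂ Ann_A(Mᵢ) = 0`. -/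
theorem stmt1 (A : Type*) [Ring A] [Algebra ℂ A] [IsNoetherianRing A]
    (hcount : Module.rank ℂ A ≤ Cardinal.aleph0)
    (ι : Type*) (M : ι → Type*) [∀ i, AddCommGroup (M i)] [∀ i, Module A (M i)]
    [∀ i, Module ℂ (M i)] [∀ i, IsScalarTower ℂ A (M i)]
    (hsimple : ∀ i, IsSimpleModule A (M i)) :
    (⨆ i, Cardinal.toENat (Module.rank ℂ (M i))) ≤ PIdeg A ∧
      ((⨅ i, Module.annihilator A (M i)) = ⊥ →
        PIdeg A = ⨆ i, Cardinal.toENat (Module.rank ℂ (M i))) :=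
  stmt1_general A hcount ι M hsimple
end

section
/- Let A be a noetherian ℂ-algebra of at most countable dimension. Then the Jacobson radical J(A) is nilpotent: there exists a constant C ∈ ℕ such that J(A)^C = 0. -/
open Polynomial Cardinal

universe u v

theorem Ideal.isUnit_one_add_of_mem_jacobson_bot {R : Type*} [Ring R] {j : R}
    (hj : j ∈ Ideal.jacobson (⊥ : Ideal R)) : IsUnit (1 + j) := by
  have left_inv : ∀ j ∈ Ideal.jacobson (⊥ : Ideal R), ∃ z, z * (1 + j) = 1 := fun j hj ↦ by
    obtain ⟨z, hz⟩ := Ideal.mem_jacobson_iff.mp hj 1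
    rw [Ideal.mem_bot, sub_eq_zero, mul_one] at hz
    exact ⟨z, by rw [mul_add, mul_one, add_comm, hz]⟩
  obtain ⟨z, hz⟩ := left_inv j hj
  -- `z = 1 + (-z * j)` has a left inverse `w` too, and then `w = w * z * (1 + j) = 1 + j`.
  have hz' : 1 + -z * j = z := by
    rw [neg_mul, ← sub_eq_add_neg, sub_eq_iff_eq_add, ← hz, mul_add, mul_one]
  obtain ⟨w, hw⟩ := left_inv (-z * j) (Ideal.mul_mem_left _ _ hj)
  rw [hz'] at hw
  have hwj : w = 1 + j := by
    calc w = w * z * (1 + j) := by rw [mul_assoc, hz, mul_one]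
    _ = 1 + j := by rw [hw, one_mul]
  exact ⟨⟨1 + j, z, hwj ▸ hw, hz⟩, rfl⟩

section Amitsur

variable {F : Type u} {A : Type v} [Field F] [Ring A] [Algebra F A]

theorem isUnit_algebraMap_add_of_mem_jacobson_bot {c : F} (hc : c ≠ 0) {a : A}
    (ha : a ∈ Ideal.jacobson (⊥ : Ideal A)) : IsUnit (algebraMap F A c + a) := by
  have hfactor : algebraMap F A c + a = algebraMap F A c * (1 + algebraMap F A c⁻¹ * a) := by
    rw [mul_add, mul_one, ← mul_assoc, ← map_mul, mul_inv_cancel₀ hc, map_one, one_mul]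
  rw [hfactor]
  exact (hc.isUnit.map _).mul
    (Ideal.isUnit_one_add_of_mem_jacobson_bot (Ideal.mul_mem_left _ _ ha))

/-- Noncommutative version of `Transcendental.linearIndependent_sub_inv`. -/
theorem linearIndependent_inverse_sub_of_transcendental {x : A} (hx : Transcendental F x)
    {s : Set F} (hs : ∀ c ∈ s, IsUnit (x - algebraMap F A c)) :
    LinearIndependent F fun c : s ↦ Ring.inverse (x - algebraMap F A c) := by
  classical
  refine linearIndependent_iff'.2 fun t m hm i hi ↦ ?_
  let p : F[X] := ∑ c ∈ t, C (m c) * ∏ d ∈ t.erase c, (X - C (d : F))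
  have hterm : ∀ c ∈ t, Ring.inverse (x - algebraMap F A c) * aeval x (∏ d ∈ t, (X - C (d : F)))
      = aeval x (∏ d ∈ t.erase c, (X - C (d : F))) := fun c hc ↦ by
    rw [← Finset.mul_prod_erase t _ hc, map_mul, ← mul_assoc, map_sub, aeval_X, aeval_C,
      Ring.inverse_mul_cancel _ (hs c c.2), one_mul]
  have hp : aeval x p = 0 := by
    have : aeval x p = (∑ c ∈ t, m c • Ring.inverse (x - algebraMap F A c)) *
        aeval x (∏ d ∈ t, (X - C (d : F))) := by
      simp only [p, map_sum, Finset.sum_mul, map_mul, aeval_C, Algebra.smul_def]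
      exact Finset.sum_congr rfl fun c hc ↦ by rw [mul_assoc, hterm c hc]
    rw [this, hm, zero_mul]
  have hpi := congr_arg (eval (i : F)) ((transcendental_iff.mp hx) p hp)
  rw [eval_zero, eval_finsetSum, Finset.sum_eq_single i] at hpi
  · simp only [eval_mul, eval_C, eval_prod, eval_sub, eval_X] at hpi
    refine (mul_eq_zero.mp hpi).resolve_right (Finset.prod_ne_zero_iff.mpr fun d hd ↦ ?_)
    exact sub_ne_zero.mpr (Subtype.coe_injective.ne (Finset.ne_of_mem_erase hd).symm)
  · intro c _ hci
    simp only [eval_mul, eval_prod, eval_sub, eval_X, eval_C]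
    exact mul_eq_zero_of_right _ (Finset.prod_eq_zero (Finset.mem_erase.mpr ⟨hci.symm, hi⟩)
      (sub_self _))
  · exact fun h ↦ absurd hi h

theorem IsAlgebraic.isNilpotent_of_mem_jacobson_bot {a : A} (halg : IsAlgebraic F a)
    (ha : a ∈ Ideal.jacobson (⊥ : Ideal A)) : IsNilpotent a := by
  obtain ⟨q, hq, hqa⟩ := halg
  obtain ⟨u, hqu, hXu⟩ := q.exists_eq_pow_rootMultiplicity_mul_and_not_dvd hq 0
  rw [map_zero, sub_zero] at hqu hXu
  -- `u(a) = u(0) + a * (u / X)(a)` with `u(0) ≠ 0`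
  have hu : IsUnit (aeval a u) := by
    rw [← X_mul_divX_add u, map_add, map_mul, aeval_X, aeval_C, add_comm]
    exact isUnit_algebraMap_add_of_mem_jacobson_bot (mt X_dvd_iff.mpr hXu)
      (Ideal.mul_mem_right _ _ ha)
  rw [hqu, map_mul, map_pow, aeval_X, hu.mul_left_eq_zero] at hqa
  exact ⟨_, hqa⟩

theorem isNilpotent_of_mem_jacobson_bot_of_lift_rank_lt [Infinite F]
    (hrank : lift.{u} (Module.rank F A) < lift.{v} #F) {a : A}
    (ha : a ∈ Ideal.jacobson (⊥ : Ideal A)) : IsNilpotent a := by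
  refine IsAlgebraic.isNilpotent_of_mem_jacobson_bot (F := F) ?_ ha
  by_contra htr
  have hunit : ∀ c ∈ ({0}ᶜ : Set F), IsUnit (a - algebraMap F A c) := fun c hc ↦ by
    have := (isUnit_algebraMap_add_of_mem_jacobson_bot hc (neg_mem ha)).neg
    rwa [neg_add_rev, neg_neg, ← sub_eq_add_neg] at this
  have hcard := (linearIndependent_inverse_sub_of_transcendental htr hunit).cardinal_lift_le_rank
  rw [mk_compl_of_infinite _ ((mk_singleton _).trans_lt (one_lt_aleph0.trans_le (aleph0_le_mk F)))]
    at hcard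
  exact not_lt_of_ge hcard hrank

end Amitsur

namespace Ideal

variable {R : Type*} [Ring R]

instance isTwoSided_sup (I J : Ideal R) [I.IsTwoSided] [J.IsTwoSided] : (I ⊔ J).IsTwoSided :=
  ⟨fun b hx ↦ by
    obtain ⟨i, hi, j, hj, rfl⟩ := Submodule.mem_sup.mp hx
    rw [add_mul]
    exact add_mem (mem_sup_left (mul_mem_right b I hi)) (mem_sup_right (mul_mem_right b J hj))⟩

theorem isNilpotent_of_mul_self_le {I M : Ideal R} (h : I * I ≤ M) (hM : IsNilpotent M) :
    IsNilpotent I := by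
  obtain ⟨n, hn⟩ := hM
  have hpow : ∀ k, I ^ (2 * k) ≤ M ^ k := by
    intro k
    induction k with
    | zero => exact le_rfl
    | succ k ih =>
      rw [Nat.mul_succ, Submodule.pow_succ, Submodule.pow_succ, Submodule.pow_succ, mul_assoc]
      exact mul_mono ih h
  exact ⟨2 * n, le_bot_iff.mp ((hpow n).trans hn.le)⟩

theorem list_ofFn_prod_mem_pow {I : Ideal R} {n : ℕ} {a : Fin n → R} (ha : ∀ i, a i ∈ I) :
    (List.ofFn a).prod ∈ I ^ n := by
  induction n with
  | zero => simp [Submodule.pow_zero, one_eq_top]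
  | succ n ih =>
    rw [List.ofFn_succ', List.prod_concat, Submodule.pow_succ]
    exact mul_mem_mul (ih fun i ↦ ha _) (ha _)

theorem span_singleton_mul_top_mul_self_le {M : Ideal R} [M.IsTwoSided] {b : R}
    (hb : ∀ x, b * x * b ∈ M) : span {b} * ⊤ * (span {b} * ⊤) ≤ M := by
  have hbb : span {b} * span {b} ≤ M := mul_le.mpr fun r hr s hs ↦ by
    obtain ⟨x, rfl⟩ := mem_span_singleton'.mp hr
    obtain ⟨y, rfl⟩ := mem_span_singleton'.mp hs
    simpa only [mul_assoc] using M.mul_mem_left x (hb y)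
  calc span {b} * ⊤ * (span {b} * ⊤) = span {b} * (⊤ * span {b}) * ⊤ := by
        simp only [mul_assoc]
    _ = span {b} * span {b} * ⊤ := by rw [top_mul]
    _ ≤ M * ⊤ := mul_mono_left hbb
    _ ≤ M := mul_le_left

theorem exists_pow_notMem_and_mul_pow_mem {M : Ideal R} {b : R} (hb : IsNilpotent b)
    (hbM : b ∉ M) : ∃ k, b ^ (k + 1) ∉ M ∧ b * b ^ (k + 1) ∈ M := by
  by_contra! h
  obtain ⟨n, hn⟩ := hb
  have hall : ∀ k, b ^ (k + 1) ∉ M := by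
    intro k
    induction k with
    | zero => simpa using hbM
    | succ k ih => rw [pow_succ']; exact h k ih
  exact hall n (by rw [pow_succ, hn, zero_mul]; exact M.zero_mem)

theorem mul_mul_mem_of_colon_maximal {M N : Ideal R} [M.IsTwoSided] [N.IsTwoSided]
    (hN : ∀ x ∈ N, IsNilpotent x) {b₀ : R} (hb₀ : b₀ ∈ N)
    (hmax : ∀ c ∈ N, c ∉ M → ¬ M.colon {b₀} < M.colon {c}) (x : R) : b₀ * x * b₀ ∈ M := by
  by_cases hbx : b₀ * x ∈ M
  · exact mul_mem_right b₀ M hbx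
  set b := b₀ * x
  obtain ⟨k, hkM, hk⟩ := exists_pow_notMem_and_mul_pow_mem (hN b (mul_mem_right x N hb₀)) hbx
  have hc : b ^ (k + 1) = b₀ * (x * b ^ k) := by rw [pow_succ', mul_assoc]
  have hle : M.colon {b₀} ≤ M.colon {b ^ (k + 1)} := fun y hy ↦ by
    rw [Submodule.mem_colon_singleton, smul_eq_mul] at hy ⊢
    rw [hc, ← mul_assoc]
    exact mul_mem_right _ M hy
  have heq : M.colon {b₀} = M.colon {b ^ (k + 1)} :=
    eq_of_le_of_not_lt hle (hmax _ (hc ▸ mul_mem_right _ N hb₀) hkM)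
  have hbc : b ∈ M.colon {b ^ (k + 1)} := by
    rwa [Submodule.mem_colon_singleton, smul_eq_mul]
  rw [← heq, Submodule.mem_colon_singleton, smul_eq_mul] at hbc
  exact hbc

theorem isNilpotent_of_forall_isNilpotent [IsNoetherianRing R] (N : Ideal R) [N.IsTwoSided]
    (hN : ∀ x ∈ N, IsNilpotent x) : IsNilpotent N := by
  have hmaximal := set_has_maximal_iff_noetherian.mpr (inferInstance : IsNoetherian R R)
  obtain ⟨M, ⟨hMtwo, hMnil⟩, hMmax⟩ := hmaximal {I : Ideal R | I.IsTwoSided ∧ IsNilpotent I}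
    ⟨⊥, inferInstance, 1, by simp [Submodule.pow_succ, Submodule.pow_zero]⟩
  suffices hNM : N ≤ M by
    obtain ⟨n, hn⟩ := hMnil
    exact ⟨n, le_bot_iff.mp ((pow_right_mono hNM n).trans hn.le)⟩
  by_contra hNM
  obtain ⟨b₁, hb₁N, hb₁M⟩ := SetLike.not_le_iff_exists.mp hNM
  obtain ⟨_, ⟨b₀, hb₀N, hb₀M, rfl⟩, hb₀max⟩ := hmaximal {L | ∃ b ∈ N, b ∉ M ∧ M.colon {b} = L}
    ⟨_, b₁, hb₁N, hb₁M, rfl⟩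
  have hkey := mul_mul_mem_of_colon_maximal hN hb₀N fun c hcN hcM ↦ hb₀max _ ⟨c, hcN, hcM, rfl⟩
  set S := M ⊔ span {b₀} * ⊤
  have hSS : S * S ≤ M := by
    rw [sup_mul, mul_sup, mul_sup]
    exact sup_le (sup_le mul_le_left mul_le_left)
      (sup_le mul_le_right (span_singleton_mul_top_mul_self_le hkey))
  have hb₀S : b₀ ∈ S := mem_sup_right <| by
    simpa using mul_mem_mul (mem_span_singleton_self b₀) (Submodule.mem_top : (1 : R) ∈ ⊤)
  exact hMmax S ⟨inferInstance, isNilpotent_of_mul_self_le hSS hMnil⟩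
    (lt_of_le_of_ne le_sup_left fun h ↦ hb₀M (h ▸ hb₀S))

end Ideal

/-- The Jacobson radical of a noetherian `ℂ`-algebra of at most countable
dimension is nilpotent: `J(A)^C = 0` for some `C ∈ ℕ`. -/
theorem stmt3 (A : Type*) [Ring A] [Algebra ℂ A] [IsNoetherianRing A]
    (hcount : Module.rank ℂ A ≤ Cardinal.aleph0) :
    ∃ C : ℕ, JacobsonPowZero A C := by
  have hrank : Cardinal.lift (Module.rank ℂ A) < Cardinal.lift #ℂ := by
    rw [mk_complex, lift_continuum]
    exact (lift_le_aleph0.mpr hcount).trans_lt aleph0_lt_continuum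
  obtain ⟨C, hC⟩ := Ideal.isNilpotent_of_forall_isNilpotent (Ideal.jacobson (⊥ : Ideal A))
    fun a ha ↦ isNilpotent_of_mem_jacobson_bot_of_lift_rank_lt hrank ha
  refine ⟨C, fun a ha ↦ ?_⟩
  simpa [hC] using Ideal.list_ofFn_prod_mem_pow ha
end

section
/- Let n be a positive integer and k ≥ n + 1. In the matrix algebra M_k(ℂ), one has s_{2n}(E_{1,1}, E_{1,2}, E_{2,2}, E_{2,3}, …, E_{n,n}, E_{n,n+1}) · E_{n+1,1} = E_{1,1}, where E_{i,j} denotes the matrix unit with 1 in position (i,j) and 0 elsewhere. In particular, this element is a nonzero idempotent of M_k(ℂ). -/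
open Matrix

theorem Matrix.list_prod_ofFn_single_one {ι R : Type*} [DecidableEq ι] [Fintype ι] [Semiring R]
    (m : ℕ) (a b : Fin (m + 1) → ι) :
    (List.ofFn fun i => single (a i) (b i) (1 : R)).prod =
      if ∀ i : Fin m, b i.castSucc = a i.succ then single (a 0) (b (Fin.last m)) 1 else 0 := by
  induction m with
  | zero => simp
  | succ m ih =>
    rw [List.ofFn_succ, List.prod_cons, ih (fun i => a i.succ) (fun i => b i.succ)]
    simp only [Fin.forall_fin_succ, Fin.succ_castSucc, Fin.castSucc_zero, Fin.succ_last]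
    by_cases h0 : b 0 = a 1 <;> simp [h0]

theorem lift_stdPoly {A : Type*} [Ring A] [Algebra ℤ A] (σ : ℕ → A) (n : ℕ) :
    FreeAlgebra.lift ℤ σ (stdPoly n) =
      ∑ w : Equiv.Perm (Fin n), ((Equiv.Perm.sign w : ℤˣ) : ℤ) • (List.ofFn fun i => σ (w i)).prod := by
  simp only [stdPoly, map_sum, map_zsmul, map_list_prod, List.map_ofFn, Function.comp_def,
    FreeAlgebra.lift_ι_apply]

theorem lift_stdPoly_staircase {R : Type*} [Ring R] (N k : ℕ) (hN : 0 < N) (hk : N / 2 < k) :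
    FreeAlgebra.lift ℤ
        (fun j : ℕ => single (⟨min (j / 2) (k - 1), by omega⟩ : Fin k)
          (⟨min ((j + 1) / 2) (k - 1), by omega⟩ : Fin k) (1 : R))
        (stdPoly N) =
      single (⟨0, by omega⟩ : Fin k) ⟨N / 2, hk⟩ 1 := by
  -- the `min` with `k - 1` only keeps the indices in `Fin k`; it is inactive on the variables `j < N`
  obtain ⟨m, rfl⟩ : ∃ m, N = m + 1 := ⟨N - 1, by omega⟩
  rw [lift_stdPoly, Finset.sum_eq_single 1]
  · rw [Equiv.Perm.sign_one, Units.val_one, one_smul, list_prod_ofFn_single_one, if_pos]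
    · congr 1 <;> ext <;> simp [Nat.min_eq_left (by omega : (m + 1) / 2 ≤ k - 1)]
    · intro i
      ext
      simp
  · intro w _ hw
    rw [list_prod_ofFn_single_one, if_neg, smul_zero]
    intro hchain
    have hmono : StrictMono w := by
      refine Fin.strictMono_iff_lt_succ.2 fun i => ?_
      have h := Fin.mk.inj (hchain i)
      have hne := Fin.val_injective.ne (w.injective.ne (Fin.castSucc_lt_succ (i := i)).ne)
      have := (w i.succ).isLt
      omega
    exact hw (Equiv.ext fun x => hmono.apply_eq)
  · simp

/-- For `n ≥ 1` and `k ≥ n + 1`, in `M_k(ℂ)` one has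
`s_{2n}(E_{1,1}, E_{1,2}, E_{2,2}, E_{2,3}, …, E_{n,n}, E_{n,n+1}) ⋅ E_{n+1,1} = E_{1,1}`;
in particular this element is a nonzero idempotent.  (Indices are 0-based in the
formalization: the `j`-th indeterminate, `0 ≤ j ≤ 2n - 1`, is sent to the matrix unit
`E_{⌊j/2⌋, ⌊(j+1)/2⌋}`, which realizes the listed sequence of matrix units.) -/
theorem stmt6 (n k : ℕ) (hn : 0 < n) (hk : n + 1 ≤ k) :
    FreeAlgebra.lift ℤ
        (fun j : ℕ => Matrix.single
          (⟨min (j / 2) (k - 1), by omega⟩ : Fin k)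
          (⟨min ((j + 1) / 2) (k - 1), by omega⟩ : Fin k) (1 : ℂ))
        (stdPoly (2 * n)) *
      Matrix.single (⟨n, by omega⟩ : Fin k) (⟨0, by omega⟩ : Fin k) (1 : ℂ) =
      Matrix.single (⟨0, by omega⟩ : Fin k) (⟨0, by omega⟩ : Fin k) (1 : ℂ) ∧
    Matrix.single (⟨0, by omega⟩ : Fin k) (⟨0, by omega⟩ : Fin k) (1 : ℂ) *
        Matrix.single (⟨0, by omega⟩ : Fin k) (⟨0, by omega⟩ : Fin k) (1 : ℂ) =
      Matrix.single (⟨0, by omega⟩ : Fin k) (⟨0, by omega⟩ : Fin k) (1 : ℂ) ∧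
    Matrix.single (⟨0, by omega⟩ : Fin k) (⟨0, by omega⟩ : Fin k) (1 : ℂ) ≠ 0 := by
  have hstair := lift_stdPoly_staircase (R := ℂ) (2 * n) k (by omega) (by omega)
  have hcol : (⟨2 * n / 2, by omega⟩ : Fin k) = ⟨n, by omega⟩ := Fin.ext (by simp)
  refine ⟨?_, ?_, ?_⟩
  · rw [hstair, hcol, single_mul_single_same, one_mul]
  · rw [single_mul_single_same, one_mul]
  · intro h
    simpa using congrFun₂ h ⟨0, by omega⟩ ⟨0, by omega⟩
end
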